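/- Let G be a connected graph and M a maximal matching of G with connected edge set C* ⊇ M such that the subgraph induced by the edges of C* is connected and contains all edges of M. Then C*, viewed as a vertex subset of the line graph L(G), is a connected dominating set of L(G). -/
import Mathlib


/-- A matching: a set of edges of `G`, no two of which share an endpoint. -/
def IsMatchingSet {V : Type*} (G : SimpleGraph V) (M : Set (Sym2 V)) : Prop :=
  M ⊆ G.edgeSet ∧
    ∀ e ∈ M, ∀ f ∈ M, e ≠ f → ∀ v : V, v ∈ e → v ∉ f

/-- An edge set is connected if the subgraph it induces on its endpoints is connected. -/
def EdgeSetConnected {V : Type*} (F : Set (Sym2 V)) : Prop :=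
  ((SimpleGraph.fromEdgeSet F).induce {v : V | ∃ e ∈ F, v ∈ e}).Connected

theorem connected_edge_set_is_CDS_of_lineGraph {V : Type*} (G : SimpleGraph V)
    (hG : G.Connected) (hE : G.edgeSet.Nonempty)
    (M : Set (Sym2 V)) (hM : IsMatchingSet G M)
    (hmax : ∀ M' : Set (Sym2 V), IsMatchingSet G M' → M ⊆ M' → M' = M)
    (Cstar : Set (Sym2 V)) (hCE : Cstar ⊆ G.edgeSet) (hMC : M ⊆ Cstar)
    (hCconn : EdgeSetConnected Cstar) :
    (G.lineGraph.induce {e : G.edgeSet | (e : Sym2 V) ∈ Cstar}).Connected ∧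
      ∀ e : G.edgeSet, (e : Sym2 V) ∉ Cstar →
        ∃ f : G.edgeSet, (f : Sym2 V) ∈ Cstar ∧ G.lineGraph.Adj e f := by
  obtain ⟨hMsub, hMdisj⟩ := hM
  -- Domination part
  have hdom : ∀ e : G.edgeSet, (e : Sym2 V) ∉ Cstar →
      ∃ f : G.edgeSet, (f : Sym2 V) ∈ Cstar ∧ G.lineGraph.Adj e f := by
    intro e he
    by_contra hcon
    push_neg at hcon
    have heM : (e : Sym2 V) ∉ M := fun h => he (hMC h)
    have hins : IsMatchingSet G (insert (e : Sym2 V) M) := by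
      constructor
      · intro x hx
        rcases hx with rfl | hx
        · exact e.2
        · exact hMsub hx
      · intro a ha b hb hab v hva hvb
        rcases ha with rfl | ha
        · rcases hb with rfl | hb
          · exact hab rfl
          · have hbC : b ∈ Cstar := hMC hb
            have hadj : G.lineGraph.Adj e ⟨b, hMsub hb⟩ := by
              rw [SimpleGraph.lineGraph_adj_iff_exists]
              refine ⟨?_, v, hva, hvb⟩
              intro h
              apply he
              rw [show (e : Sym2 V) = b from congrArg Subtype.val h]
              exact hbC
            exact hcon ⟨b, hMsub hb⟩ hbC hadj
        · rcases hb with rfl | hb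
          · have haC : a ∈ Cstar := hMC ha
            have hadj : G.lineGraph.Adj e ⟨a, hMsub ha⟩ := by
              rw [SimpleGraph.lineGraph_adj_iff_exists]
              refine ⟨?_, v, hvb, hva⟩
              intro h
              apply he
              rw [show (e : Sym2 V) = a from congrArg Subtype.val h]
              exact haC
            exact hcon ⟨a, hMsub ha⟩ haC hadj
          · exact hMdisj a ha b hb hab v hva hvb
    have := hmax _ hins (Set.subset_insert _ _)
    exact heM (this ▸ Set.mem_insert _ _)
  -- Cstar is nonempty
  have hCne : Cstar.Nonempty := by
    obtain ⟨e0, he0⟩ := hE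
    by_cases h : e0 ∈ Cstar
    · exact ⟨e0, h⟩
    · obtain ⟨f, hf, _⟩ := hdom ⟨e0, he0⟩ h
      exact ⟨f, hf⟩
  -- one-step reachability
  have step : ∀ (e f : G.edgeSet) (he : (e : Sym2 V) ∈ Cstar) (hf : (f : Sym2 V) ∈ Cstar)
      (u : V), u ∈ (e : Sym2 V) → u ∈ (f : Sym2 V) →
      (G.lineGraph.induce {e : G.edgeSet | (e : Sym2 V) ∈ Cstar}).Reachable ⟨e, he⟩ ⟨f, hf⟩ := by
    intro e f he hf u hue huf
    by_cases hef : e = f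
    · subst hef
      rfl
    · refine SimpleGraph.Adj.reachable ?_
      show G.lineGraph.Adj e f
      rw [SimpleGraph.lineGraph_adj_iff_exists]
      exact ⟨hef, u, hue, huf⟩
  -- walk induction
  have aux : ∀ (u v : {v : V | ∃ e ∈ Cstar, v ∈ e})
      (_ : ((SimpleGraph.fromEdgeSet Cstar).induce {v : V | ∃ e ∈ Cstar, v ∈ e}).Walk u v)
      (e f : G.edgeSet) (he : (e : Sym2 V) ∈ Cstar) (hf : (f : Sym2 V) ∈ Cstar),
      (u : V) ∈ (e : Sym2 V) → (v : V) ∈ (f : Sym2 V) →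
      (G.lineGraph.induce {e : G.edgeSet | (e : Sym2 V) ∈ Cstar}).Reachable ⟨e, he⟩ ⟨f, hf⟩ := by
    intro u v W
    induction W with
    | nil =>
      intro e f he hf hue hvf
      exact step e f he hf _ hue hvf
    | @cons a b c h W ih =>
      intro e f he hf hue hvf
      have hadj : (SimpleGraph.fromEdgeSet Cstar).Adj (a : V) (b : V) := h
      rw [SimpleGraph.fromEdgeSet_adj] at hadj
      obtain ⟨hgC, hne⟩ := hadj
      have hg : s((a : V), (b : V)) ∈ G.edgeSet := hCE hgC
      refine (step e ⟨_, hg⟩ he hgC (a : V) hue ?_).trans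
        (ih ⟨_, hg⟩ f hgC hf ?_ hvf)
      · exact Sym2.mem_mk_left _ _
      · exact Sym2.mem_mk_right _ _
  constructor
  · rw [SimpleGraph.connected_iff]
    constructor
    · rintro ⟨e, he⟩ ⟨f, hf⟩
      have hu : (e : Sym2 V).out.1 ∈ {v : V | ∃ e ∈ Cstar, v ∈ e} :=
        ⟨e, he, Sym2.out_fst_mem _⟩
      have hv : (f : Sym2 V).out.1 ∈ {v : V | ∃ e ∈ Cstar, v ∈ e} :=
        ⟨f, hf, Sym2.out_fst_mem _⟩
      obtain ⟨W⟩ := hCconn.preconnected ⟨_, hu⟩ ⟨_, hv⟩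
      exact aux _ _ W e f he hf (Sym2.out_fst_mem _) (Sym2.out_fst_mem _)
    · obtain ⟨e0, he0⟩ := hCne
      exact ⟨⟨⟨e0, hCE he0⟩, he0⟩⟩
  · exact hdom
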